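/- arXiv:1312.4639 — 2 statements merged into one kernel-verified Lean document; each statement's English description precedes it below -/
import Mathlib

section
/- For all natural numbers k ≥ 1, m, r ≥ 1 and d ≥ 1 there exists a natural number n such that for every coloring c : FIN_k(n)^{[d]} → {0,…,r−1} of the block sequences of length d in FIN_k(n) there exists a block sequence (f_i)_{i<m} of length m of elements of FIN_k(n) such that c is constant on the set of block sequences of length d contained in the combinatorial space ⟨f_i⟩_{i<m}. -/
/-- `f` is a member of `FIN_k`: finitely supported `ℕ`-valued function with
values `≤ k` that attains the value `k`. -/
def IsFINk (k : ℕ) (f : ℕ →₀ ℕ) : Prop :=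
  (∀ n, f n ≤ k) ∧ (∃ n, f n = k)

/-- `FIN_k(N)`: the members of `FIN_k` supported inside `{0, …, N-1}`. -/
def FINkN (k N : ℕ) : Set (ℕ →₀ ℕ) :=
  {f | IsFINk k f ∧ ∀ n ∈ f.support, n < N}

/-- The block relation `f < g`: the support of `f` lies entirely below the support of `g`. -/
def Blk (f g : ℕ →₀ ℕ) : Prop :=
  ∀ i ∈ f.support, ∀ j ∈ g.support, i < j

/-- The Tetris operation `(T f)(x) = max {0, f x - 1}`. -/
noncomputable def Tetris (f : ℕ →₀ ℕ) : ℕ →₀ ℕ :=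
  Finsupp.mapRange (· - 1) (by simp) f

/-- `(F i)_{i<m}` is a block sequence of length `m`. -/
def IsBlockSeqFin (m : ℕ) (F : ℕ → (ℕ →₀ ℕ)) : Prop :=
  ∀ i j : ℕ, i < j → j < m → Blk (F i) (F j)

/-- `(G i)_{i<d}` is a block sequence (a `d`-tuple version). -/
def IsBlockTuple (d : ℕ) (G : Fin d → (ℕ →₀ ℕ)) : Prop :=
  ∀ i j : Fin d, i < j → Blk (G i) (G j)

/-- The combinatorial space `⟨F i⟩_{i<m}` generated by a block sequence `(F i)_{i<m}`:
all sums `T^{l_1}(f_{i_1}) + … + T^{l_p}(f_{i_p})` with `i_1 < … < i_p < m` and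
`min {l_1, …, l_p} = 0`. -/
def CombSpace (m : ℕ) (F : ℕ → (ℕ →₀ ℕ)) : Set (ℕ →₀ ℕ) :=
  {g | ∃ (s : Finset ℕ) (l : ℕ → ℕ), s.Nonempty ∧ (∀ i ∈ s, i < m) ∧
      (∃ i ∈ s, l i = 0) ∧ g = ∑ i ∈ s, Tetris^[l i] (F i)}

/-!
Following Gowers, there are ultrafilters `U 0 = pure 0, U 1, …, U k` on `ℕ →₀ ℕ` such that `U j`
lives on the tails of `FIN_j`, `T (U (j + 1)) = U j` and `U i + U j = U (max i j)`; `U (j + 1)` is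
`U j + W` for an idempotent `W` of a closed subsemigroup of the compact semigroup of ultrafilters.

For a colouring `c` of `d`-tuples, `U k`-limits taken coordinate by coordinate give a colour `b`.
The block sequence is chosen one element at a time, keeping the invariant that every block tuple
of the span built so far, followed by a partial sum `y` and a `U j`-generic remainder, is still
`U k`-large for `b`; the next element can be taken `U k`-generic because `T^l (U k) = U (k - l)`
and `U (k - l) + U j = U (max (k - l) j)`.

The finite statement follows by compactness: a counterexample colouring for every `n` would have
a limit along an ultrafilter on `n` that contradicts the infinite statement.
-/

open Filter Function

attribute [local instance] Ultrafilter.add Ultrafilter.addSemigroup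

theorem tetris_iterate_apply (l : ℕ) (f : ℕ →₀ ℕ) (p : ℕ) : (Tetris^[l] f) p = f p - l := by
  induction l generalizing f with
  | zero => rfl
  | succ l ih =>
    rw [iterate_succ_apply, ih]
    simp only [Tetris, Finsupp.mapRange_apply]
    omega

theorem tetris_iterate_eq_zero {k l : ℕ} {f : ℕ →₀ ℕ} (hf : ∀ p, f p ≤ k) (hl : k ≤ l) :
    Tetris^[l] f = 0 := by
  ext p
  have := hf p
  rw [tetris_iterate_apply, Finsupp.coe_zero, Pi.zero_apply]
  omega

theorem tetris_iterate_min {k : ℕ} {f : ℕ →₀ ℕ} (hf : ∀ p, f p ≤ k) (l : ℕ) :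
    Tetris^[min l k] f = Tetris^[l] f := by
  ext p
  have := hf p
  simp only [tetris_iterate_apply]
  omega

theorem support_tetris_iterate_subset (l : ℕ) (f : ℕ →₀ ℕ) :
    (Tetris^[l] f).support ⊆ f.support := by
  intro p
  simp only [Finsupp.mem_support_iff, tetris_iterate_apply]
  omega

theorem Finsupp.apply_eq_zero_or_apply_eq_zero {α M : Type*} [Zero M] {f g : α →₀ M}
    (h : Disjoint f.support g.support) (p : α) : f p = 0 ∨ g p = 0 := by
  by_contra! hfg
  exact Finset.disjoint_left.1 h (Finsupp.mem_support_iff.2 hfg.1) (Finsupp.mem_support_iff.2 hfg.2)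

theorem tetris_add {f g : ℕ →₀ ℕ} (h : Disjoint f.support g.support) :
    Tetris (f + g) = Tetris f + Tetris g := by
  ext p
  have := Finsupp.apply_eq_zero_or_apply_eq_zero h p
  simp only [Tetris, Finsupp.mapRange_apply, Finsupp.add_apply]
  omega

theorem Blk.mono {f g f' g' : ℕ →₀ ℕ} (h : Blk f g) (hf : f'.support ⊆ f.support)
    (hg : g'.support ⊆ g.support) : Blk f' g' :=
  fun p hp q hq => h p (hf hp) q (hg hq)

theorem Blk.disjoint {f g : ℕ →₀ ℕ} (h : Blk f g) : Disjoint f.support g.support :=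
  Finset.disjoint_left.2 fun p hf hg => lt_irrefl p (h p hf p hg)

theorem Blk.add_right {f g g' : ℕ →₀ ℕ} (hg : Blk f g) (hg' : Blk f g') : Blk f (g + g') := by
  intro p hp q hq
  rcases Finset.mem_union.1 (Finsupp.support_add hq) with hq | hq
  exacts [hg p hp q hq, hg' p hp q hq]

theorem blk_sum_left {s : Finset ℕ} {F : ℕ → ℕ →₀ ℕ} {g : ℕ →₀ ℕ}
    (h : ∀ u ∈ s, Blk (F u) g) : Blk (∑ u ∈ s, F u) g := by
  intro p hp q hq
  obtain ⟨u, hu, hpu⟩ := Finset.mem_biUnion.1 (Finsupp.support_finsetSum hp)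
  exact h u hu p hpu q hq

theorem isBlockTuple_snoc_iff {t : ℕ} {x : Fin t → ℕ →₀ ℕ} {y : ℕ →₀ ℕ} :
    IsBlockTuple (t + 1) (Fin.snoc x y) ↔ IsBlockTuple t x ∧ ∀ i, Blk (x i) y := by
  constructor
  · intro h
    refine ⟨fun i j hij => ?_, fun i => ?_⟩
    · simpa using h i.castSucc j.castSucc (Fin.castSucc_lt_castSucc_iff.2 hij)
    · simpa using h i.castSucc (Fin.last t) (Fin.castSucc_lt_last i)
  · rintro ⟨hx, hy⟩ i j hij
    induction j using Fin.lastCases with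
    | last =>
      induction i using Fin.lastCases with
      | last => exact absurd hij (lt_irrefl _)
      | cast i => simpa using hy i
    | cast j =>
      induction i using Fin.lastCases with
      | last => exact absurd hij (not_lt.2 (Fin.castSucc_lt_last j).le)
      | cast i => simpa using hx i j (Fin.castSucc_lt_castSucc_iff.1 hij)

theorem IsFINk.ne_zero {k : ℕ} {f : ℕ →₀ ℕ} (hf : IsFINk k f) (hk : 1 ≤ k) : f ≠ 0 := by
  rintro rfl
  obtain ⟨p, hp⟩ := hf.2
  rw [Finsupp.coe_zero, Pi.zero_apply] at hp
  omega

theorem IsFINk.tetris_iterate {k : ℕ} {f : ℕ →₀ ℕ} (hf : IsFINk k f) (l : ℕ) :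
    IsFINk (k - l) (Tetris^[l] f) := by
  obtain ⟨hle, p, hp⟩ := hf
  refine ⟨fun q => ?_, p, ?_⟩ <;> rw [tetris_iterate_apply]
  · have := hle q
    omega
  · omega

theorem IsFINk.add {i j : ℕ} {f g : ℕ →₀ ℕ} (hd : Disjoint f.support g.support) (hf : IsFINk i f)
    (hg : IsFINk j g) : IsFINk (max i j) (f + g) := by
  have hfg := Finsupp.apply_eq_zero_or_apply_eq_zero hd
  refine ⟨fun p => ?_, ?_⟩
  · have := hf.1 p
    have := hg.1 p
    have := hfg p
    rw [Finsupp.add_apply]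
    omega
  · obtain ⟨p, hp⟩ := hf.2
    obtain ⟨q, hq⟩ := hg.2
    have := hf.1 q
    have := hg.1 p
    have := hfg p
    have := hfg q
    rcases le_total i j with hij | hij
    · exact ⟨q, by rw [Finsupp.add_apply]; omega⟩
    · exact ⟨p, by rw [Finsupp.add_apply]; omega⟩

theorem IsFINk.of_add_left {k : ℕ} {f g : ℕ →₀ ℕ} (hd : Disjoint f.support g.support)
    (h : IsFINk k (f + g)) (hg : ∀ p, g p < k) : IsFINk k f := by
  obtain ⟨hle, p, hp⟩ := h
  refine ⟨fun q => ?_, p, ?_⟩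
  · have := hle q
    rw [Finsupp.add_apply] at this
    omega
  · have := hg p
    have := Finsupp.apply_eq_zero_or_apply_eq_zero hd p
    rw [Finsupp.add_apply] at hp
    omega

section TetrisSpan

def tetrisSpan (F : ℕ → ℕ →₀ ℕ) (n : ℕ) : Set (ℕ →₀ ℕ) :=
  {x | ∃ l : ℕ → ℕ, x = ∑ u ∈ Finset.range n, Tetris^[l u] (F u)}

variable {F : ℕ → ℕ →₀ ℕ} {n k : ℕ}

theorem tetrisSpan_zero : tetrisSpan F 0 = {0} := by
  simp [tetrisSpan]

theorem mem_tetrisSpan_succ {x : ℕ →₀ ℕ} :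
    x ∈ tetrisSpan F (n + 1) ↔ ∃ y ∈ tetrisSpan F n, ∃ l, x = y + Tetris^[l] (F n) := by
  constructor
  · rintro ⟨l, rfl⟩
    exact ⟨_, ⟨l, rfl⟩, l n, Finset.sum_range_succ _ _⟩
  · rintro ⟨_, ⟨l, rfl⟩, a, rfl⟩
    refine ⟨update l n a, ?_⟩
    rw [Finset.sum_range_succ, update_self]
    congr 1
    refine Finset.sum_congr rfl fun u hu => ?_
    rw [update_of_ne (Finset.mem_range.1 hu).ne]

theorem mem_tetrisSpan_update_succ {g x : ℕ →₀ ℕ} :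
    x ∈ tetrisSpan (update F n g) (n + 1) ↔ ∃ y ∈ tetrisSpan F n, ∃ l, x = y + Tetris^[l] g := by
  have : tetrisSpan (update F n g) n = tetrisSpan F n := by
    ext x
    simp only [tetrisSpan]
    refine exists_congr fun l => Eq.congr_right (Finset.sum_congr rfl fun u hu => ?_)
    rw [update_of_ne (Finset.mem_range.1 hu).ne]
  rw [mem_tetrisSpan_succ, this, update_self]

theorem tetrisSpan_finite (hF : ∀ u < n, ∀ p, F u p ≤ k) : (tetrisSpan F n).Finite := by
  induction n with
  | zero => simp [tetrisSpan_zero]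
  | succ n ih =>
    refine ((ih fun u hu => hF u (by omega)).image2 (· + ·)
      ((Set.finite_Iic k).image fun l => Tetris^[l] (F n))).subset ?_
    rintro x hx
    obtain ⟨y, hy, l, rfl⟩ := mem_tetrisSpan_succ.1 hx
    exact ⟨y, hy, _, ⟨min l k, min_le_right l k, rfl⟩,
      congrArg (y + ·) (tetris_iterate_min (hF n n.lt_succ_self) l)⟩

theorem blk_of_mem_tetrisSpan {x g : ℕ →₀ ℕ} (hx : x ∈ tetrisSpan F n)
    (hg : ∀ u < n, Blk (F u) g) : Blk x g := by
  obtain ⟨l, rfl⟩ := hx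
  exact blk_sum_left fun u hu =>
    (hg u (Finset.mem_range.1 hu)).mono (support_tetris_iterate_subset _ _) subset_rfl

theorem isFINk_sum_tetris (hF : ∀ u < n, IsFINk k (F u)) (hblk : IsBlockSeqFin n F) (l : ℕ → ℕ) :
    IsFINk ((Finset.range n).sup fun u => k - l u) (∑ u ∈ Finset.range n, Tetris^[l u] (F u)) := by
  induction n with
  | zero => exact ⟨fun p => by simp, 0, by simp⟩
  | succ n ih =>
    rw [Finset.sum_range_succ, Finset.range_add_one, Finset.sup_insert, max_comm]
    refine (ih (fun u hu => hF u (by omega)) fun i j hij hj => hblk i j hij (by omega)).add ?_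
      ((hF n n.lt_succ_self).tetris_iterate _)
    exact (blk_of_mem_tetrisSpan ⟨l, rfl⟩ fun u hu => (hblk u n hu n.lt_succ_self).mono subset_rfl
      (support_tetris_iterate_subset _ _)).disjoint

theorem combSpace_subset (hF : ∀ u < n, IsFINk k (F u)) (hblk : IsBlockSeqFin n F) :
    CombSpace n F ⊆ tetrisSpan F n ∩ {g | IsFINk k g} := by
  classical
  rintro _ ⟨s, l, -, hsn, ⟨u₀, hu₀, hl₀⟩, rfl⟩
  set l' : ℕ → ℕ := fun u => if u ∈ s then l u else k
  have hsum : ∑ i ∈ s, Tetris^[l i] (F i) = ∑ u ∈ Finset.range n, Tetris^[l' u] (F u) := by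
    rw [← Finset.sum_subset (fun u hu => Finset.mem_range.2 (hsn u hu)) fun u hu hus => ?_]
    · exact Finset.sum_congr rfl fun u hu => by simp only [l', if_pos hu]
    · simp only [l', if_neg hus]
      exact tetris_iterate_eq_zero (hF u (Finset.mem_range.1 hu)).1 le_rfl
  have hsup : ((Finset.range n).sup fun u => k - l' u) = k :=
    le_antisymm (Finset.sup_le fun u _ => Nat.sub_le k _)
      (Finset.le_sup_of_le (Finset.mem_range.2 (hsn u₀ hu₀)) (by simp [l', hu₀, hl₀]))
  rw [hsum]
  exact ⟨⟨l', rfl⟩, hsup ▸ isFINk_sum_tetris hF hblk l'⟩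

theorem combSpace_finite (hF : ∀ u < n, IsFINk k (F u)) (hblk : IsBlockSeqFin n F) :
    (CombSpace n F).Finite :=
  (tetrisSpan_finite fun u hu => (hF u hu).1).subset fun _ hg => (combSpace_subset hF hblk hg).1

end TetrisSpan

theorem Ultrafilter.exists_eventually_eq {α β : Type*} [Finite β] (U : Ultrafilter α)
    (φ : α → β) : ∃ b, ∀ᶠ a in U, φ a = b := by
  obtain ⟨b, hb⟩ := (U.map φ).eq_pure_of_finite
  exact ⟨b, (Ultrafilter.mem_map (s := {b})).1 (hb ▸ Ultrafilter.mem_pure.2 rfl)⟩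

structure IsCofinalFIN (j : ℕ) (U : Ultrafilter (ℕ →₀ ℕ)) : Prop where
  eventually_isFINk : ∀ᶠ f in U, IsFINk j f
  eventually_blk : ∀ g, ∀ᶠ f in U, Blk g f

theorem isCofinalFIN_pure_zero : IsCofinalFIN 0 (pure 0) :=
  ⟨⟨fun _ => le_rfl, 0, rfl⟩, fun _ _ _ _ hq => absurd hq (by simp)⟩

theorem isClosed_setOf_isCofinalFIN (j : ℕ) : IsClosed {U | IsCofinalFIN j U} := by
  have : {U | IsCofinalFIN j U} = {U | {f | IsFINk j f} ∈ U} ∩ ⋂ g, {U | {f | Blk g f} ∈ U} := by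
    ext U
    simp only [Set.mem_inter_iff, Set.mem_iInter]
    exact ⟨fun h => ⟨h.1, h.2⟩, fun h => ⟨h.1, h.2⟩⟩
  rw [this]
  exact (ultrafilter_isClosed_basic _).inter (isClosed_iInter fun _ => ultrafilter_isClosed_basic _)

theorem IsCofinalFIN.add {i j : ℕ} {U V : Ultrafilter (ℕ →₀ ℕ)} (hU : IsCofinalFIN i U)
    (hV : IsCofinalFIN j V) : IsCofinalFIN (max i j) (U + V) where
  eventually_isFINk := by
    rw [Ultrafilter.eventually_add]
    filter_upwards [hU.1] with f hf
    filter_upwards [hV.1, hV.2 f] with g hg hfg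
    exact hf.add hfg.disjoint hg
  eventually_blk g := by
    rw [Ultrafilter.eventually_add]
    filter_upwards [hU.2 g] with f hf
    filter_upwards [hV.2 g] with f' hf'
    exact hf.add_right hf'

theorem map_tetris_add {U V : Ultrafilter (ℕ →₀ ℕ)} (hV : ∀ g, ∀ᶠ f in V, Blk g f) :
    (U + V).map Tetris = U.map Tetris + V.map Tetris := by
  refine Ultrafilter.coe_le_coe.1 fun s hs => ?_
  change ∀ᶠ f in U, ∀ᶠ f' in V, Tetris f + Tetris f' ∈ s at hs
  change ∀ᶠ f in U, ∀ᶠ f' in V, Tetris (f + f') ∈ s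
  filter_upwards [hs] with f hf
  filter_upwards [hf, hV f] with f' hf' hff'
  rwa [tetris_add hff'.disjoint]

theorem IsCofinalFIN.eq_pure_zero {U : Ultrafilter (ℕ →₀ ℕ)} (hU : IsCofinalFIN 0 U) :
    U = pure 0 := by
  refine Ultrafilter.coe_le_coe.1 fun s hs => ?_
  filter_upwards [hU.1] with f hf
  have : f = 0 := Finsupp.ext fun p => Nat.le_zero.1 (hf.1 p)
  exact this ▸ hs

theorem IsCofinalFIN.map_tetris_eq_pure_zero {V : Ultrafilter (ℕ →₀ ℕ)} (hV : IsCofinalFIN 1 V) :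
    V.map Tetris = pure 0 := by
  refine Ultrafilter.coe_le_coe.1 fun s hs => ?_
  rw [Ultrafilter.mem_coe, Ultrafilter.mem_map]
  filter_upwards [hV.1] with f hf
  change Tetris^[1] f ∈ s
  rwa [tetris_iterate_eq_zero hf.1 le_rfl]

theorem exists_isCofinalFIN_one : ∃ V, IsCofinalFIN 1 V := by
  refine ⟨(Ultrafilter.of atTop).map fun p => Finsupp.single p 1, ?_, fun g => ?_⟩ <;>
    rw [Ultrafilter.coe_map, eventually_map]
  · refine Eventually.of_forall fun p => ⟨fun q => ?_, p, by simp⟩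
    rw [Finsupp.single_apply]
    split <;> omega
  · refine ((eventually_gt_atTop (g.support.sup id)).filter_mono (Ultrafilter.of_le _)).mono
      fun p hp q hq r hr => ?_
    rw [Finsupp.support_single _ one_ne_zero, Finset.mem_singleton] at hr
    exact hr ▸ lt_of_le_of_lt (Finset.le_sup (f := id) hq) hp

theorem IsCofinalFIN.exists_map_tetris_eq {K : ℕ} {U : Ultrafilter (ℕ →₀ ℕ)}
    (hU : IsCofinalFIN K U) : ∃ V, IsCofinalFIN (K + 1) V ∧ V.map Tetris = U := by
  rcases Nat.eq_zero_or_pos K with rfl | hK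
  · obtain ⟨V, hV⟩ := exists_isCofinalFIN_one
    exact ⟨V, hV, hV.map_tetris_eq_pure_zero.trans hU.eq_pure_zero.symm⟩
  · let lift : (ℕ →₀ ℕ) → (ℕ →₀ ℕ) := fun f =>
      f.mapRange (fun a => if a = 0 then 0 else a + 1) (by simp)
    have hlift : ∀ f p, lift f p = if f p = 0 then 0 else f p + 1 :=
      fun f p => Finsupp.mapRange_apply ..
    have htl : Tetris ∘ lift = id := by
      funext f
      ext p
      simp only [comp_apply, id, Tetris, Finsupp.mapRange_apply, hlift]
      split <;> omega
    refine ⟨U.map lift, ⟨?_, fun g => ?_⟩, by rw [Ultrafilter.map_map, htl, Ultrafilter.map_id]⟩ <;>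
      simp only [Ultrafilter.coe_map, eventually_map]
    · filter_upwards [hU.1] with f hf
      obtain ⟨p, hp⟩ := hf.2
      refine ⟨fun q => ?_, p, by rw [hlift]; split <;> omega⟩
      have := hf.1 q
      rw [hlift]
      split <;> omega
    · filter_upwards [hU.2 g] with f hf
      exact hf.mono subset_rfl (Finsupp.support_mapRange)

section TetrisChain

structure IsTetrisChain (k : ℕ) (U : ℕ → Ultrafilter (ℕ →₀ ℕ)) : Prop where
  zero : U 0 = pure 0
  isCofinalFIN : ∀ j ≤ k, IsCofinalFIN j (U j)
  map_tetris : ∀ j < k, (U (j + 1)).map Tetris = U j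
  add : ∀ i ≤ k, ∀ j ≤ k, U i + U j = U (max i j)

variable {k : ℕ} {U : ℕ → Ultrafilter (ℕ →₀ ℕ)}

theorem IsTetrisChain.map_tetris_iterate (hU : IsTetrisChain k U) {l j : ℕ} (hl : l ≤ j)
    (hj : j ≤ k) : (U j).map Tetris^[l] = U (j - l) := by
  induction l generalizing j with
  | zero => exact Ultrafilter.map_id _
  | succ l ih =>
    obtain ⟨j, rfl⟩ : ∃ i, j = i + 1 := ⟨j - 1, by omega⟩
    rw [iterate_succ, ← Ultrafilter.map_map, hU.map_tetris j (by omega), ih (by omega) (by omega)]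
    congr 1
    omega

theorem IsTetrisChain.map_tetris_top (hU : IsTetrisChain k U) : (U k).map Tetris = U (k - 1) := by
  rcases Nat.eq_zero_or_pos k with rfl | hk
  · rw [hU.zero, Ultrafilter.map_pure]
    exact congrArg pure Finsupp.mapRange_zero
  · simpa using hU.map_tetris_iterate hk le_rfl

theorem IsTetrisChain.exists_idempotent (hU : IsTetrisChain k U) :
    ∃ W, IsCofinalFIN (k + 1) W ∧ W.map Tetris = U k ∧ W + U k = W ∧ W + W = W := by
  have hUk : U k + U k = U k := by simpa using hU.add k le_rfl k le_rfl
  have hUkT : U k + (U k).map Tetris = U k := by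
    simpa [hU.map_tetris_top] using hU.add k le_rfl (k - 1) (by omega)
  obtain ⟨V, hV, hVT⟩ := (hU.isCofinalFIN k le_rfl).exists_map_tetris_eq
  let Y := {W | IsCofinalFIN (k + 1) W ∧ W.map Tetris = U k ∧ W + U k = W}
  have hT : IsClosed {W : Ultrafilter (ℕ →₀ ℕ) | W.map Tetris = U k} := by
    convert isClosed_biInter fun s (_ : s ∈ U k) => ultrafilter_isClosed_basic (Tetris ⁻¹' s)
      using 1
    ext W
    simp only [Set.mem_iInter]
    exact ⟨fun h s hs => Ultrafilter.mem_map.1 (h ▸ hs),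
      fun h => Ultrafilter.coe_le_coe.1 fun s hs => h s hs⟩
  have hY : IsClosed Y := (isClosed_setOf_isCofinalFIN _).inter
    (hT.inter (isClosed_eq (Ultrafilter.continuous_add_left _) continuous_id))
  obtain ⟨W, ⟨hW, hWT, hWU⟩, hWW⟩ :=
    exists_idempotent_in_compact_add_subsemigroup Ultrafilter.continuous_add_left Y
      ⟨V + U k, by simpa using hV.add (hU.isCofinalFIN k le_rfl),
        by rw [map_tetris_add (hU.isCofinalFIN k le_rfl).2, hVT, hUkT],
        by rw [add_assoc, hUk]⟩ hY.isCompact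
      fun W₁ h₁ W₂ h₂ => ⟨by simpa using h₁.1.add h₂.1,
        by rw [map_tetris_add h₂.1.2, h₁.2.1, h₂.2.1, hUk], by rw [add_assoc, h₂.2.2]⟩
  exact ⟨W, hW, hWT, hWU, hWW⟩

theorem IsTetrisChain.exists_succ (hU : IsTetrisChain k U) : ∃ U', IsTetrisChain (k + 1) U' := by
  obtain ⟨W, hW, hWT, hWU, hWW⟩ := hU.exists_idempotent
  have hW_add : ∀ i ≤ k, W + U i = W := fun i hi => by
    rw [← hWU, add_assoc, hU.add k le_rfl i hi, max_eq_left hi]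
  have hadd_W : ∀ i ≤ k, U i + (U k + W) = U k + W := fun i hi => by
    rw [← add_assoc, hU.add i hi k le_rfl, max_eq_right hi]
  refine ⟨fun j => if j ≤ k then U j else U k + W, ⟨by simpa using hU.zero, fun j hj => ?_,
    fun j hj => ?_, fun i hi j hj => ?_⟩⟩
  · split_ifs with hjk
    · exact hU.isCofinalFIN j hjk
    · obtain rfl : j = k + 1 := by omega
      simpa using (hU.isCofinalFIN k le_rfl).add hW
  · by_cases hjk : j + 1 ≤ k
    · rw [if_pos hjk, if_pos (by omega : j ≤ k)]
      exact hU.map_tetris j hjk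
    · obtain rfl : j = k := by omega
      rw [if_neg hjk, if_pos le_rfl, map_tetris_add hW.2, hWT, hU.map_tetris_top,
        hU.add (j - 1) (by omega) j le_rfl, max_eq_right (Nat.sub_le j 1)]
  · by_cases hik : i ≤ k <;> by_cases hjk : j ≤ k
    · rw [if_pos hik, if_pos hjk, if_pos (max_le hik hjk), hU.add i hik j hjk]
    · rw [if_pos hik, if_neg hjk, if_neg (by omega), hadd_W i hik]
    · rw [if_neg hik, if_pos hjk, if_neg (by omega), add_assoc, hW_add j hjk]
    · rw [if_neg hik, if_neg hjk, if_neg (by omega), add_assoc, ← add_assoc W, hWU, hWW]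

theorem exists_isTetrisChain (k : ℕ) : ∃ U, IsTetrisChain k U := by
  induction k with
  | zero =>
    refine ⟨fun _ => pure 0, rfl, fun j hj => ?_, fun j hj => absurd hj (Nat.not_lt_zero j),
      fun i hi j hj => ?_⟩
    · obtain rfl : j = 0 := by omega
      exact isCofinalFIN_pure_zero
    · exact Ultrafilter.coe_le_coe.1 fun s hs =>
        (Ultrafilter.eventually_add _ _ (· ∈ s)).2 (by simpa using hs)
  | succ k ih => exact ih.elim fun U hU => hU.exists_succ

end TetrisChain

section IterLarge

variable {α : Type*} {d : ℕ}

def IterLarge (U : Ultrafilter α) (A : (Fin d → α) → Prop) (t : ℕ) (x : Fin t → α) : Prop :=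
  if ht : t < d then ∀ᶠ a in U, IterLarge U A (t + 1) (Fin.snoc x a)
  else A fun i => x ⟨i, by omega⟩
termination_by d - t

variable {U : Ultrafilter α} {A : (Fin d → α) → Prop}

theorem iterLarge_of_lt {t : ℕ} (ht : t < d) {x : Fin t → α} :
    IterLarge U A t x ↔ ∀ᶠ a in U, IterLarge U A (t + 1) (Fin.snoc x a) := by
  rw [IterLarge, dif_pos ht]

theorem iterLarge_self {x : Fin d → α} : IterLarge U A d x ↔ A x := by
  rw [IterLarge, dif_neg (lt_irrefl d)]

theorem exists_iterLarge {β : Type*} [Finite β] (U : Ultrafilter α) (c : (Fin d → α) → β)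
    (t : ℕ) (x : Fin t → α) : ∃ b, IterLarge U (fun G => c G = b) t x := by
  by_cases ht : t < d
  · choose b hb using fun a => exists_iterLarge U c (t + 1) (Fin.snoc x a)
    obtain ⟨b₀, hb₀⟩ := U.exists_eventually_eq b
    refine ⟨b₀, (iterLarge_of_lt ht).2 ?_⟩
    filter_upwards [hb₀] with a ha
    exact ha ▸ hb a
  · exact ⟨c fun i => x ⟨i, by omega⟩, by rw [IterLarge, dif_neg ht]⟩
termination_by d - t

end IterLarge

section Construction

variable {k d : ℕ} {U : ℕ → Ultrafilter (ℕ →₀ ℕ)} {A : (Fin d → ℕ →₀ ℕ) → Prop}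
  {F : ℕ → ℕ →₀ ℕ} {n : ℕ}

theorem mem_tetrisSpan_of_mem_update {g x : ℕ →₀ ℕ} {p : ℕ} (hg : ∀ q, g q ≤ k) (hp : g p = k)
    (hx : x ∈ tetrisSpan (update F n g) (n + 1)) (hxp : x p = 0) : x ∈ tetrisSpan F n := by
  obtain ⟨x', hx', a, rfl⟩ := mem_tetrisSpan_update_succ.1 hx
  rw [Finsupp.add_apply, tetris_iterate_apply, hp] at hxp
  rwa [tetris_iterate_eq_zero hg (by omega), add_zero]

theorem exists_mem_support_add_tetris_le (hk : 1 ≤ k) {g y : ℕ →₀ ℕ} {l p : ℕ} (hg : ∀ q, g q ≤ k)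
    (hp : g p = k) (hyg : Blk y g) (hne : y + Tetris^[l] g ≠ 0) :
    ∃ q ∈ (y + Tetris^[l] g).support, q ≤ p := by
  rcases eq_or_ne y 0 with rfl | hy
  · have hl : l < k := by
      by_contra! hl
      exact hne (by rw [tetris_iterate_eq_zero hg hl, add_zero])
    refine ⟨p, ?_, le_rfl⟩
    rw [Finsupp.mem_support_iff, zero_add, tetris_iterate_apply, hp]
    omega
  · obtain ⟨q, hq⟩ := Finsupp.support_nonempty_iff.2 hy
    refine ⟨q, Finsupp.support_mono le_self_add hq, (hyg q hq p ?_).le⟩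
    rw [Finsupp.mem_support_iff, hp]
    omega

/-- The invariant of the construction once `F 0, …, F (n - 1)` are chosen: `y` is the part of the
next coordinate built so far, and its remainder `e` will come from `U j`; `j < k` is only allowed
once `y` attains `k`. -/
def LargeExtensions (k : ℕ) (U : ℕ → Ultrafilter (ℕ →₀ ℕ)) (A : (Fin d → ℕ →₀ ℕ) → Prop)
    (F : ℕ → ℕ →₀ ℕ) (n : ℕ) : Prop :=
  ∀ t < d, ∀ x : Fin t → ℕ →₀ ℕ, (∀ i, x i ∈ tetrisSpan F n ∧ IsFINk k (x i)) →
    ∀ y ∈ tetrisSpan F n, y ≠ 0 → IsBlockTuple (t + 1) (Fin.snoc x y) →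
    ∀ j ≤ k, (IsFINk k y ∨ j = k) → ∀ᶠ e in U j, IterLarge (U k) A (t + 1) (Fin.snoc x (y + e))

def IsLargeNext (k : ℕ) (U : ℕ → Ultrafilter (ℕ →₀ ℕ)) (A : (Fin d → ℕ →₀ ℕ) → Prop)
    (F : ℕ → ℕ →₀ ℕ) (n : ℕ) (g : ℕ →₀ ℕ) : Prop :=
  IsFINk k g ∧ (∀ u < n, Blk (F u) g) ∧
    ∀ t < d, ∀ x : Fin t → ℕ →₀ ℕ, (∀ i, x i ∈ tetrisSpan F n ∧ IsFINk k (x i)) →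
    ∀ y ∈ tetrisSpan F n, IsBlockTuple (t + 1) (Fin.snoc x y) → ∀ l ≤ k, ∀ j ≤ k,
    (IsFINk k y ∨ l = 0 ∨ j = k) →
    ∀ᶠ e in U j, IterLarge (U k) A (t + 1) (Fin.snoc x (y + Tetris^[l] g + e))

theorem LargeExtensions.iterLarge (hk : 1 ≤ k) (hU0 : U 0 = pure 0)
    (hA : IterLarge (U k) A 0 Fin.elim0) (h : LargeExtensions k U A F n) {t : ℕ} (ht : t ≤ d)
    {x : Fin t → ℕ →₀ ℕ} (hx : ∀ i, x i ∈ tetrisSpan F n ∧ IsFINk k (x i))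
    (hxb : IsBlockTuple t x) : IterLarge (U k) A t x := by
  cases t with
  | zero => exact Subsingleton.elim Fin.elim0 x ▸ hA
  | succ t =>
    have := h t ht (Fin.init x) (fun i => hx _) (x (Fin.last t)) (hx _).1 ((hx _).2.ne_zero hk)
      (by rwa [Fin.snoc_init_self]) 0 (Nat.zero_le k) (Or.inl (hx _).2)
    rwa [hU0, Ultrafilter.coe_pure, eventually_pure, add_zero, Fin.snoc_init_self] at this

theorem LargeExtensions.eventually (hk : 1 ≤ k) (hU0 : U 0 = pure 0)
    (hA : IterLarge (U k) A 0 Fin.elim0) (h : LargeExtensions k U A F n) {t : ℕ} (ht : t < d)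
    {x : Fin t → ℕ →₀ ℕ} (hx : ∀ i, x i ∈ tetrisSpan F n ∧ IsFINk k (x i))
    {y : ℕ →₀ ℕ} (hy : y ∈ tetrisSpan F n) (hb : IsBlockTuple (t + 1) (Fin.snoc x y))
    {j : ℕ} (hj : j ≤ k) (hflag : IsFINk k y ∨ j = k) :
    ∀ᶠ e in U j, IterLarge (U k) A (t + 1) (Fin.snoc x (y + e)) := by
  rcases eq_or_ne y 0 with rfl | hy0
  · obtain rfl : j = k := hflag.resolve_left fun h0 => h0.ne_zero hk rfl
    simpa only [zero_add] using (iterLarge_of_lt ht).1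
      (h.iterLarge hk hU0 hA ht.le hx (isBlockTuple_snoc_iff.1 hb).1)
  · exact h t ht x hx y hy hy0 hb j hj hflag

theorem LargeExtensions.eventually_tetris (hk : 1 ≤ k) (hU : IsTetrisChain k U)
    (hA : IterLarge (U k) A 0 Fin.elim0) (h : LargeExtensions k U A F n) {t : ℕ} (ht : t < d)
    {x : Fin t → ℕ →₀ ℕ} (hx : ∀ i, x i ∈ tetrisSpan F n ∧ IsFINk k (x i))
    {y : ℕ →₀ ℕ} (hy : y ∈ tetrisSpan F n) (hb : IsBlockTuple (t + 1) (Fin.snoc x y))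
    {l j : ℕ} (hl : l ≤ k) (hj : j ≤ k) (hflag : IsFINk k y ∨ l = 0 ∨ j = k) :
    ∀ᶠ g in U k, ∀ᶠ e in U j, IterLarge (U k) A (t + 1) (Fin.snoc x (y + Tetris^[l] g + e)) := by
  have := h.eventually hk hU.zero hA ht hx hy hb (j := max (k - l) j)
    (max_le (Nat.sub_le k l) hj) (hflag.imp_right fun h => by omega)
  rw [← hU.add (k - l) (Nat.sub_le k l) j hj, Ultrafilter.eventually_add,
    ← hU.map_tetris_iterate hl le_rfl, Ultrafilter.coe_map, eventually_map] at this
  simpa only [add_assoc] using this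

theorem LargeExtensions.exists_isLargeNext (hk : 1 ≤ k) (hU : IsTetrisChain k U)
    (hA : IterLarge (U k) A 0 Fin.elim0) (hF : ∀ u < n, IsFINk k (F u))
    (h : LargeExtensions k U A F n) : ∃ g, IsLargeNext k U A F n g := by
  have hfin := tetrisSpan_finite fun u hu => (hF u hu).1
  have hnext : ∀ᶠ g in U k, ∀ t ∈ Set.Iio d,
      ∀ x ∈ {x : Fin t → ℕ →₀ ℕ | ∀ i, x i ∈ tetrisSpan F n}, ∀ y ∈ tetrisSpan F n,
      ∀ l ∈ Set.Iic k, ∀ j ∈ Set.Iic k, (∀ i, IsFINk k (x i)) →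
      IsBlockTuple (t + 1) (Fin.snoc x y) → (IsFINk k y ∨ l = 0 ∨ j = k) →
      ∀ᶠ e in U j, IterLarge (U k) A (t + 1) (Fin.snoc x (y + Tetris^[l] g + e)) := by
    refine (eventually_all_finite (Set.finite_Iio d)).2 fun t ht =>
      (eventually_all_finite (Set.Finite.pi' fun _ => hfin)).2 fun x hx =>
      (eventually_all_finite hfin).2 fun y hy =>
      (eventually_all_finite (Set.finite_Iic k)).2 fun l hl =>
      (eventually_all_finite (Set.finite_Iic k)).2 fun j hj => ?_
    simp only [eventually_imp_distrib_left]
    exact fun hxk hb hflag =>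
      h.eventually_tetris hk hU hA ht (fun i => ⟨hx i, hxk i⟩) hy hb hl hj hflag
  have hblk : ∀ᶠ g in U k, ∀ u ∈ Set.Iio n, Blk (F u) g :=
    (eventually_all_finite (Set.finite_Iio n)).2 fun u _ =>
      (hU.isCofinalFIN k le_rfl).eventually_blk (F u)
  obtain ⟨g, hg, hgb, hgnext⟩ :=
    ((hU.isCofinalFIN k le_rfl).eventually_isFINk.and (hblk.and hnext)).exists
  exact ⟨g, hg, hgb, fun t ht x hx y hy hb l hl j hj hflag =>
    hgnext t ht x (fun i => (hx i).1) y hy l hl j hj (fun i => (hx i).2) hb hflag⟩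

theorem IsLargeNext.largeExtensions_update (hk : 1 ≤ k) {g : ℕ →₀ ℕ}
    (hg : IsLargeNext k U A F n g) : LargeExtensions k U A (update F n g) (n + 1) := by
  obtain ⟨hgk, hgb, hgnext⟩ := hg
  intro t ht x hx y hy hy0 hb j hj hflag
  obtain ⟨p, hp⟩ := hgk.2
  obtain ⟨y', hy', l, rfl⟩ := mem_tetrisSpan_update_succ.1 hy
  have hy'g : Blk y' g := blk_of_mem_tetrisSpan hy' hgb
  obtain ⟨q, hq, hqp⟩ := exists_mem_support_add_tetris_le hk hgk.1 hp hy'g hy0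
  rw [isBlockTuple_snoc_iff] at hb
  have hx' : ∀ i, x i ∈ tetrisSpan F n ∧ IsFINk k (x i) := fun i => by
    refine ⟨mem_tetrisSpan_of_mem_update hgk.1 hp (hx i).1 ?_, (hx i).2⟩
    by_contra hxp
    exact not_lt.2 hqp (hb.2 i p (Finsupp.mem_support_iff.2 hxp) q hq)
  have hb' : IsBlockTuple (t + 1) (Fin.snoc x y') := isBlockTuple_snoc_iff.2
    ⟨hb.1, fun i => (hb.2 i).mono subset_rfl (Finsupp.support_mono le_self_add)⟩
  rw [← tetris_iterate_min hgk.1 l]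
  refine hgnext t ht x hx' y' hy' hb' (min l k) (min_le_right l k) j hj ?_
  rcases Nat.eq_zero_or_pos (min l k) with h0 | hpos
  · exact Or.inr (Or.inl h0)
  · refine hflag.imp (fun hfin => hfin.of_add_left ?_ fun q => ?_) Or.inr
    · exact (hy'g.mono subset_rfl (support_tetris_iterate_subset l g)).disjoint
    · have := hgk.1 q
      rw [tetris_iterate_apply]
      omega

theorem exists_largeExtensions (hk : 1 ≤ k) (hU : IsTetrisChain k U)
    (hA : IterLarge (U k) A 0 Fin.elim0) (n : ℕ) : ∃ F : ℕ → ℕ →₀ ℕ,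
      (∀ u < n, IsFINk k (F u)) ∧ IsBlockSeqFin n F ∧ LargeExtensions k U A F n := by
  induction n with
  | zero =>
    refine ⟨0, fun u hu => absurd hu u.not_lt_zero, fun _ j _ hj => absurd hj j.not_lt_zero,
      fun t _ x _ y hy hy0 => absurd ?_ hy0⟩
    rwa [tetrisSpan_zero] at hy
  | succ n ih =>
    obtain ⟨F, hF, hblk, hF_large⟩ := ih
    obtain ⟨g, hg⟩ := hF_large.exists_isLargeNext hk hU hA hF
    refine ⟨update F n g, fun u hu => ?_, fun i j hij hj => ?_, hg.largeExtensions_update hk⟩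
    · rcases Nat.lt_succ_iff_lt_or_eq.1 hu with hu | rfl
      · rw [update_of_ne hu.ne]
        exact hF u hu
      · rw [update_self]
        exact hg.1
    · rw [update_of_ne (by omega : i ≠ n)]
      rcases Nat.lt_succ_iff_lt_or_eq.1 hj with hj | rfl
      · rw [update_of_ne hj.ne]
        exact hblk i j hij hj
      · rw [update_self]
        exact hg.2.1 i hij

theorem exists_blockSeq_forall_combSpace (hk : 1 ≤ k) (hU : IsTetrisChain k U)
    (hA : IterLarge (U k) A 0 Fin.elim0) (m : ℕ) : ∃ F : ℕ → ℕ →₀ ℕ,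
      (∀ i < m, IsFINk k (F i)) ∧ IsBlockSeqFin m F ∧
      ∀ G, IsBlockTuple d G → (∀ i, G i ∈ CombSpace m F) → A G := by
  obtain ⟨F, hF, hblk, hF_large⟩ := exists_largeExtensions hk hU hA m
  exact ⟨F, hF, hblk, fun G hG hGm => iterLarge_self.1 <|
    hF_large.iterLarge hk hU.zero hA le_rfl (fun i => combSpace_subset hF hblk (hGm i)) hG⟩

end Construction

theorem exists_blockSeq_combSpace_monochromatic {k d : ℕ} (hk : 1 ≤ k) {β : Type*} [Finite β]
    (c : (Fin d → ℕ →₀ ℕ) → β) (m : ℕ) : ∃ F : ℕ → ℕ →₀ ℕ,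
      (∀ i < m, IsFINk k (F i)) ∧ IsBlockSeqFin m F ∧
      ∃ b, ∀ G, IsBlockTuple d G → (∀ i, G i ∈ CombSpace m F) → c G = b := by
  obtain ⟨U, hU⟩ := exists_isTetrisChain k
  obtain ⟨b, hb⟩ := exists_iterLarge (U k) c 0 Fin.elim0
  obtain ⟨F, hF, hblk, hFb⟩ := exists_blockSeq_forall_combSpace hk hU hb m
  exact ⟨F, hF, hblk, b, hFb⟩

theorem finite_FINk_theorem_multidim_general (k m r d : ℕ) (hk : 1 ≤ k) :
    ∃ n : ℕ, ∀ c : (Fin d → (ℕ →₀ ℕ)) → Fin r,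
      ∃ F : ℕ → (ℕ →₀ ℕ),
        (∀ i < m, F i ∈ FINkN k n) ∧ IsBlockSeqFin m F ∧
        ∀ G H : Fin d → (ℕ →₀ ℕ),
          IsBlockTuple d G → (∀ i, G i ∈ CombSpace m F) →
          IsBlockTuple d H → (∀ i, H i ∈ CombSpace m F) →
          c G = c H := by
  by_contra! hcon
  choose c hc using hcon
  let 𝒰 := Ultrafilter.of (atTop : Filter ℕ)
  choose C hC using fun G => 𝒰.exists_eventually_eq fun n => c n G
  obtain ⟨F, hF, hblk, b, hb⟩ := exists_blockSeq_combSpace_monochromatic hk C m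
  have hspace : {G : Fin d → ℕ →₀ ℕ | ∀ i, G i ∈ CombSpace m F}.Finite :=
    Set.Finite.pi' fun _ => combSpace_finite hF hblk
  have hsupp : ∀ᶠ n in atTop, ∀ i ∈ Set.Iio m, ∀ p ∈ ((F i).support : Set ℕ), p < n :=
    (eventually_all_finite (Set.finite_Iio m)).2 fun i _ =>
      (eventually_all_finite (F i).support.finite_toSet).2 fun p _ => eventually_gt_atTop p
  obtain ⟨n, hn, hcC⟩ := ((hsupp.filter_mono (Ultrafilter.of_le _)).and
    ((eventually_all_finite hspace).2 fun G _ => hC G)).exists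
  obtain ⟨G, H, hG, hGm, hH, hHm, hne⟩ := hc n F (fun i hi => ⟨hF i hi, hn i hi⟩) hblk
  exact hne (by rw [hcC G hGm, hcC H hHm, hb G hG hGm, hb H hH hHm])

/-- **Finite `FIN_k` theorem, multidimensional form.** For all `k ≥ 1`, `m`, `r ≥ 1`, `d ≥ 1`
there is `n` such that every `r`-coloring of the block sequences of length `d` in `FIN_k(n)`
admits a block sequence of length `m` in `FIN_k(n)` such that the coloring is constant on the
block sequences of length `d` contained in its combinatorial space. -/
theorem finite_FINk_theorem_multidim (k m r d : ℕ) (hk : 1 ≤ k) (hr : 1 ≤ r) (hd : 1 ≤ d) :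
    ∃ n : ℕ, ∀ c : (Fin d → (ℕ →₀ ℕ)) → Fin r,
      ∃ F : ℕ → (ℕ →₀ ℕ),
        (∀ i < m, F i ∈ FINkN k n) ∧ IsBlockSeqFin m F ∧
        ∀ G H : Fin d → (ℕ →₀ ℕ),
          IsBlockTuple d G → (∀ i, G i ∈ CombSpace m F) →
          IsBlockTuple d H → (∀ i, H i ∈ CombSpace m F) →
          c G = c H :=
  finite_FINk_theorem_multidim_general k m r d hk
end

section
/- For all natural numbers m and r ≥ 1 there exists a natural number N such that for every coloring c of the nonempty subsets of {0,…,N−1} with r colors there exists a block sequence (x_i)_{i<m} of nonempty subsets of {0,…,N−1} such that the restriction of c to the combinatorial space ⟨x_i⟩_{i<m} is min-determined: whenever x = ⋃_{i∈s} x_i and y = ⋃_{i∈t} x_i with nonempty s, t ⊆ {0,…,m−1} and min s = min t, one has c(x) = c(y). -/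
/-
Folkman's theorem via Hindman's theorem. Colour a positive integer `n` by the colour of its set
of binary digits and take a stream `b` all of whose finite sums get one colour. Grouping `b` into
consecutive blocks whose sums `d₀, d₁, …` satisfy `dᵢ < 2 ^ a ∣ dⱼ` for `i < j` (possible by
pigeonhole on prefix sums mod `2 ^ a`) makes the binary digits of the `dₖ` a block sequence, and
a union of such digit sets is the digit set of a finite sum of `b`. The finite version then
follows by compactness: a limit along an ultrafilter of counterexample colourings would have no
monochromatic block sequence.
-/

/-- The block relation on finite sets: `max x < min y`. -/
def BlkS (x y : Finset ℕ) : Prop :=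
  ∀ i ∈ x, ∀ j ∈ y, i < j

/-- `(X i)_{i<m}` is a block sequence of nonempty finite sets. -/
def IsBlockSeqS (m : ℕ) (X : ℕ → Finset ℕ) : Prop :=
  ∀ i j : ℕ, i < j → j < m → BlkS (X i) (X j)

/-- `(G i)_{i<d}` is a block sequence (a `d`-tuple version). -/
def IsBlockTupleS (d : ℕ) (G : Fin d → Finset ℕ) : Prop :=
  ∀ i j : Fin d, i < j → BlkS (G i) (G j)

/-- The combinatorial space `⟨X i⟩_{i<m}`: all unions `⋃_{i ∈ s} X i` with `∅ ≠ s ⊆ {0,…,m-1}`. -/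
def CombSpaceS (m : ℕ) (X : ℕ → Finset ℕ) : Set (Finset ℕ) :=
  {z | ∃ s : Finset ℕ, s.Nonempty ∧ (∀ i ∈ s, i < m) ∧ z = s.biUnion X}

open Finset Filter Function

lemma BlkS.disjoint {x y : Finset ℕ} (h : BlkS x y) : Disjoint x y :=
  disjoint_left.mpr fun a hx hy => lt_irrefl a (h a hx a hy)

lemma blkS_bitIndices_of_lt_of_dvd {x y a : ℕ} (hx : x < 2 ^ a) (hy : 2 ^ a ∣ y) :
    BlkS x.bitIndices.toFinset y.bitIndices.toFinset := by
  obtain ⟨k, rfl⟩ := hy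
  intro i hi j hj
  have hia : i < a := (Nat.pow_lt_pow_iff_right (by norm_num)).mp
    ((Nat.two_pow_le_of_mem_bitIndices (List.mem_toFinset.mp hi)).trans_lt hx)
  simp only [Nat.bitIndices_two_pow_mul, List.mem_toFinset, List.mem_map] at hj
  obtain ⟨j', -, rfl⟩ := hj
  omega

lemma exists_Ico_sum_dvd (f : ℕ → ℕ) {n : ℕ} (hn : 0 < n) (p : ℕ) :
    ∃ q q', p ≤ q ∧ q < q' ∧ n ∣ ∑ i ∈ Ico q q', f i := by
  have hcard : #(range n) < #(range (n + 1)) := by simp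
  obtain ⟨j₁, -, j₂, -, hne, hmod⟩ := exists_ne_map_eq_of_card_lt_of_maps_to hcard
    (f := fun j => (∑ i ∈ Ico p (p + j), f i) % n) fun j _ => mem_range.mpr (Nat.mod_lt _ hn)
  have key : ∀ j j', j < j' → (∑ i ∈ Ico p (p + j), f i) ≡ ∑ i ∈ Ico p (p + j'), f i [MOD n] →
      ∃ q q', p ≤ q ∧ q < q' ∧ n ∣ ∑ i ∈ Ico q q', f i := by
    intro j j' hjj' h
    refine ⟨p + j, p + j', by omega, by omega, ?_⟩
    rwa [← sum_Ico_consecutive f (by omega : p ≤ p + j) (by omega : p + j ≤ p + j'),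
      Nat.modEq_iff_dvd' (Nat.le_add_right _ _), Nat.add_sub_cancel_left] at h
  rcases hne.lt_or_gt with h | h
  · exact key j₁ j₂ h hmod
  · exact key j₂ j₁ h hmod.symm

lemma exists_blocks_sum_lt_two_pow_dvd (b : ℕ → ℕ) :
    ∃ J : ℕ → Finset ℕ, (∀ k, (J k).Nonempty) ∧ Pairwise (Disjoint on J) ∧
      ∀ i j, i < j → ∃ a, ∑ u ∈ J i, b u < 2 ^ a ∧ 2 ^ a ∣ ∑ u ∈ J j, b u := by
  -- The `k`-th block lies in `[e k, e (k + 1))` and its sum is divisible by `2 ^ a` with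
  -- `a = ∑ u < e k, b u`, which bounds the sums of all earlier blocks.
  choose q q' hpq hqq' hdvd using fun p =>
    exists_Ico_sum_dvd b (pow_pos two_pos (∑ u ∈ range p, b u)) p
  set e : ℕ → ℕ := fun k => q'^[k] 0
  have he_succ : ∀ k, e (k + 1) = q' (e k) := fun k => iterate_succ_apply' q' k 0
  have he : StrictMono e := strictMono_nat_of_lt_succ fun k => by
    rw [he_succ]; exact (hpq _).trans_lt (hqq' _)
  have hJ : ∀ k, Ico (q (e k)) (q' (e k)) ⊆ Ico (e k) (e (k + 1)) := fun k => by
    rw [he_succ]; exact Ico_subset_Ico (hpq _) le_rfl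
  refine ⟨fun k => Ico (q (e k)) (q' (e k)), fun k => nonempty_Ico.mpr (hqq' _), ?_, ?_⟩
  · intro i j hij
    wlog h : i < j generalizing i j
    · exact (this hij.symm (hij.lt_or_gt.resolve_left h)).symm
    refine disjoint_left.mpr fun u hi hj => ?_
    have := he.monotone (show i + 1 ≤ j by omega)
    have := mem_Ico.mp (hJ i hi); have := mem_Ico.mp (hJ j hj)
    omega
  · intro i j hij
    refine ⟨∑ u ∈ range (e j), b u, ?_, hdvd _⟩
    have hsub : Ico (q (e i)) (q' (e i)) ⊆ range (e j) := fun u hu => by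
      have := he.monotone (show i + 1 ≤ j by omega)
      have := mem_Ico.mp (hJ i hu)
      exact mem_range.mpr (by omega)
    exact (sum_le_sum_of_subset hsub).trans_lt Nat.lt_two_pow_self

lemma Hindman.pos_of_mem_FS {a : Stream' ℕ} (ha : ∀ i, 0 < a.get i) {n : ℕ}
    (hn : n ∈ Hindman.FS a) : 0 < n := by
  induction hn with
  | head' a => exact ha 0
  | tail' a n _ ih => exact ih fun i => ha (i + 1)
  | cons' a n _ ih => exact Nat.add_pos_right _ (ih fun i => ha (i + 1))

lemma Hindman.exists_pos_FS_monochromatic {α : Type*} [Finite α] (c : ℕ → α) :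
    ∃ b : Stream' ℕ, (∀ i, 0 < b.get i) ∧ ∃ v, ∀ n ∈ Hindman.FS b, c n = v := by
  obtain ⟨-, ⟨v, rfl⟩, b, hb⟩ := Hindman.FS_partition_regular (Stream'.const 1)
    (Set.range fun v => {n | 0 < n ∧ c n = v}) (Set.finite_range _)
    fun n hn => ⟨_, ⟨c n, rfl⟩, Hindman.pos_of_mem_FS (fun _ => one_pos) hn, rfl⟩
  exact ⟨b, fun i => (hb (Hindman.FS.singleton b i)).1, v, fun n hn => (hb hn).2⟩

theorem exists_blockSeq_monochromatic {α : Type*} [Finite α] (c : Finset ℕ → α) :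
    ∃ X : ℕ → Finset ℕ, (∀ i, (X i).Nonempty) ∧ (∀ i j, i < j → BlkS (X i) (X j)) ∧
      ∃ v, ∀ s : Finset ℕ, s.Nonempty → c (s.biUnion X) = v := by
  obtain ⟨b, hb, v, hv⟩ := Hindman.exists_pos_FS_monochromatic fun n => c n.bitIndices.toFinset
  obtain ⟨J, hJne, hJdisj, hJdvd⟩ := exists_blocks_sum_lt_two_pow_dvd b.get
  set X : ℕ → Finset ℕ := fun k => (∑ u ∈ J k, b.get u).bitIndices.toFinset
  have hX : ∀ k, ∑ a ∈ X k, 2 ^ a = ∑ u ∈ J k, b.get u := fun k =>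
    sum_toFinset_bitIndices_two_pow _
  have hblk : ∀ i j, i < j → BlkS (X i) (X j) := fun i j hij => by
    obtain ⟨a, hlt, hdvd⟩ := hJdvd i j hij
    exact blkS_bitIndices_of_lt_of_dvd hlt hdvd
  refine ⟨X, fun k => ?_, hblk, v, fun s hs => ?_⟩
  · refine nonempty_iff_ne_empty.mpr fun h => (sum_pos (fun u _ => hb u) (hJne k)).ne' ?_
    rw [← hX, h, sum_empty]
  · have hXdisj : (s : Set ℕ).PairwiseDisjoint X := fun i _ j _ hij => by
      rcases hij.lt_or_gt with h | h
      exacts [(hblk i j h).disjoint, (hblk j i h).disjoint.symm]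
    have hsum : ∑ u ∈ s.biUnion J, b.get u = ∑ a ∈ s.biUnion X, 2 ^ a := by
      rw [sum_biUnion (hJdisj.set_pairwise _), sum_biUnion hXdisj]
      exact sum_congr rfl fun k _ => (hX k).symm
    have hmem := Hindman.FS.finsetSum b _ (hs.biUnion fun k _ => hJne k)
    rw [← hv _ hmem, hsum, toFinset_bitIndices_sum_two_pow]

lemma Ultrafilter.exists_forall_eventually_eq {ι α β : Type*} [Finite β] (U : Ultrafilter ι)
    (f : ι → α → β) : ∃ g : α → β, ∀ a, ∀ᶠ i in U, f i a = g a := by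
  choose g hg using fun a => (U.map fun i => f i a).eq_pure_of_finite
  refine ⟨g, fun a => ?_⟩
  have : {g a} ∈ U.map fun i => f i a := by rw [hg a]; exact Ultrafilter.mem_pure.mpr rfl
  exact this

theorem folkman_min_determined_general (m r : ℕ) :
    ∃ N : ℕ, ∀ c : Finset ℕ → Fin r,
      ∃ X : ℕ → Finset ℕ,
        (∀ i < m, (X i).Nonempty ∧ ∀ a ∈ X i, a < N) ∧ IsBlockSeqS m X ∧
        ∀ s t : Finset ℕ, ∀ hs : s.Nonempty, ∀ ht : t.Nonempty,
          (∀ i ∈ s, i < m) → (∀ i ∈ t, i < m) → s.min' hs = t.min' ht →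
          c (s.biUnion X) = c (t.biUnion X) := by
  by_contra! hbad
  choose c hc using hbad
  obtain ⟨c₀, hc₀⟩ := (hyperfilter ℕ).exists_forall_eventually_eq c
  obtain ⟨X, hXne, hXblk, v, hv⟩ := exists_blockSeq_monochromatic c₀
  obtain ⟨B, hB⟩ := ((range m).biUnion X).exists_nat_subset_range
  obtain ⟨N, hN, hBN⟩ : ∃ N, (∀ u ∈ (range m).powerset, c N (u.biUnion X) = c₀ (u.biUnion X)) ∧
      B ≤ N :=
    (((eventually_all_finset _).mpr fun u _ => hc₀ _).and
      ((eventually_ge_atTop B).filter_mono Nat.hyperfilter_le_atTop)).exists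
  have hX_lt : ∀ i < m, ∀ a ∈ X i, a < N := fun i hi a ha =>
    (mem_range.mp (hB (mem_biUnion.mpr ⟨i, mem_range.mpr hi, ha⟩))).trans_le hBN
  obtain ⟨s, t, hs, ht, hsm, htm, -, hst⟩ :=
    hc N X (fun i hi => ⟨hXne i, hX_lt i hi⟩) fun i j hij _ => hXblk i j hij
  have hcN : ∀ u : Finset ℕ, (∀ i ∈ u, i < m) → c N (u.biUnion X) = c₀ (u.biUnion X) :=
    fun u hu => hN u (mem_powerset.mpr fun i hi => mem_range.mpr (hu i hi))
  exact hst (by rw [hcN s hsm, hcN t htm, hv s hs, hv t ht])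

/-- For all `m` and `r ≥ 1` there is `N` such that for every `r`-coloring of the nonempty
subsets of `{0,…,N-1}` there is a block sequence `(x_i)_{i<m}` of nonempty subsets of
`{0,…,N-1}` on whose combinatorial space the coloring is min-determined: unions over index
sets with the same minimum get the same color. -/
theorem folkman_min_determined (m r : ℕ) (hr : 1 ≤ r) :
    ∃ N : ℕ, ∀ c : Finset ℕ → Fin r,
      ∃ X : ℕ → Finset ℕ,
        (∀ i < m, (X i).Nonempty ∧ ∀ a ∈ X i, a < N) ∧ IsBlockSeqS m X ∧
        ∀ s t : Finset ℕ, ∀ hs : s.Nonempty, ∀ ht : t.Nonempty,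
          (∀ i ∈ s, i < m) → (∀ i ∈ t, i < m) → s.min' hs = t.min' ht →
          c (s.biUnion X) = c (t.biUnion X) :=
  folkman_min_determined_general m r
end
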